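/- (Lattice core of the classification of complex rigid generalized K3 surfaces.) Let σ ∈ Λ_ℂ with Re σ and Im σ ℝ-linearly independent in Λ_ℝ, and let β ∈ ℂ. Set Re φ = (0, Re σ, Re β) and Im φ = (0, Im σ, Im β) in M_ℝ. Then the following are equivalent: (a) there exists a ℤ-submodule L ⊆ M of rank 2 whose ℝ-span contains both Re φ and Im φ; (b) there exists a ℤ-submodule T ⊆ Λ of rank 2 whose ℝ-span contains both Re σ and Im σ, and there exists a ℚ-linear map f : Λ_ℚ → ℚ whose ℂ-linear extension to Λ_ℂ satisfies f(σ) = β. (Condition (b) is the Mukai-lattice translation of: the transcendental lattice of M_σ has rank 2 and the B-field B' with β = ∫ B' ∧ σ is rational.) -/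

import Mathlib

noncomputable section

/-- The canonical map `Λ = ℤᵐ → Λ_ℝ = ℝᵐ`. -/
def intCast {m : ℕ} (v : Fin m → ℤ) : Fin m → ℝ := fun i => (v i : ℝ)

/-- The Mukai lattice `M = ℤ × Λ × ℤ` viewed inside `M_ℝ = ℝ × Λ_ℝ × ℝ`. -/
def Mset (m : ℕ) : Set (ℝ × (Fin m → ℝ) × ℝ) :=
  {w | ∃ (a c : ℤ) (x : Fin m → ℤ), w = ((a : ℝ), intCast x, (c : ℝ))}

/-!
A rank-2 sublattice of `M` is spanned by two lattice vectors `(aⱼ, xⱼ, cⱼ)`. If `Re φ` and `Im φ`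
lie in its real span, then `s₁, s₂` lie in the real span of `x₁, x₂`, which are therefore
independent, and a rational functional with `f xⱼ = cⱼ` satisfies `f σ = β`. Conversely, given a
rational `f` with `f σ = β`, pick an integer `N` clearing the denominators of `f` on `Λ`: the
image of `T` under `x ↦ N • (0, x, f x)` is a sublattice of `M` of the same rank whose real span
contains `(0, s, f s)` for every `s` in the real span of `T`.
-/

open Module Submodule

theorem exists_common_denominator {ι : Type*} [Finite ι] (q : ι → ℚ) :
    ∃ N : ℤ, N ≠ 0 ∧ ∃ k : ι → ℤ, ∀ i, (k i : ℚ) = N * q i := by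
  obtain ⟨⟨N, hN⟩, h⟩ := IsLocalization.exist_integer_multiples_of_finite (nonZeroDivisors ℤ) q
  choose k hk using h
  exact ⟨N, nonZeroDivisors.ne_zero hN, k, fun i => by simpa using hk i⟩

theorem LinearIndependent.exists_linearMap_apply_eq {K V ι : Type*} [Field K] [AddCommGroup V]
    [Module K V] {v : ι → V} (hv : LinearIndependent K v) (c : ι → K) :
    ∃ f : V →ₗ[K] K, ∀ i, f (v i) = c i := by
  obtain ⟨f, hf⟩ := LinearMap.exists_extend ((Basis.span hv).constr K c)
  refine ⟨f, fun i => ?_⟩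
  calc f (v i) = (f ∘ₗ (span K (Set.range v)).subtype) (Basis.span hv i) := by
        rw [LinearMap.comp_apply, subtype_apply, Basis.span_apply]
    _ = c i := by rw [hf, Basis.constr_basis]

theorem LinearIndependent.pair_of_mem_span_pair {K V : Type*} [Field K] [AddCommGroup V]
    [Module K V] {s₁ s₂ u₁ u₂ : V} (hs : LinearIndependent K ![s₁, s₂])
    (h₁ : s₁ ∈ span K {u₁, u₂}) (h₂ : s₂ ∈ span K {u₁, u₂}) :
    LinearIndependent K ![u₁, u₂] := by
  have hle : span K (Set.range ![s₁, s₂]) ≤ span K (Set.range ![u₁, u₂]) := by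
    rw [Matrix.range_cons_cons_empty, Matrix.range_cons_cons_empty, span_le]
    rintro x (rfl | rfl) <;> assumption
  have : FiniteDimensional K (span K (Set.range ![u₁, u₂])) :=
    FiniteDimensional.span_of_finite K (Set.finite_range _)
  rw [linearIndependent_iff_card_eq_finrank_span, Set.finrank]
  refine le_antisymm ?_ (finrank_range_le_card _)
  calc Fintype.card (Fin 2) = finrank K (span K (Set.range ![s₁, s₂])) :=
        (finrank_span_eq_card hs).symm
    _ ≤ _ := Submodule.finrank_mono hle

theorem Submodule.exists_eq_span_pair_of_finrank_eq_two {R E : Type*} [CommRing R] [IsDomain R]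
    [IsPrincipalIdealRing R] [AddCommGroup E] [Module R E] [IsTorsionFree R E]
    {Λ L : Submodule R E} [Module.Finite R Λ] (hle : L ≤ Λ) (hL : finrank R L = 2) :
    ∃ u v, L = span R {u, v} := by
  have : Module.Finite R L := Module.Finite.of_injective _ (inclusion_injective hle)
  have : Module.Free R L := Module.free_of_finite_type_torsion_free'
  let b := finBasisOfFinrankEq R L hL
  refine ⟨b 0, b 1, ?_⟩
  have hb : Set.range b = {b 0, b 1} := by ext; simp [Fin.exists_fin_two, eq_comm]
  calc L = map L.subtype (span R (Set.range b)) := by rw [b.span_eq, map_subtype_top]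
    _ = span R {(b 0 : E), (b 1 : E)} := by rw [map_span, hb, Set.image_pair]; rfl

variable {m : ℕ}

def intCastLinearMap (m : ℕ) : (Fin m → ℤ) →ₗ[ℤ] Fin m → ℝ :=
  (Int.castAddHom ℝ).toIntLinearMap.compLeft (Fin m)

def mukaiLattice (m : ℕ) : Submodule ℤ (ℝ × (Fin m → ℝ) × ℝ) :=
  LinearMap.range <| (Int.castAddHom ℝ).toIntLinearMap.prodMap <|
    (intCastLinearMap m).prodMap (Int.castAddHom ℝ).toIntLinearMap

theorem coe_mukaiLattice : (mukaiLattice m : Set (ℝ × (Fin m → ℝ) × ℝ)) = Mset m := by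
  ext w
  constructor
  · rintro ⟨⟨a, x, c⟩, rfl⟩
    exact ⟨a, c, x, rfl⟩
  · rintro ⟨a, c, x, rfl⟩
    exact ⟨⟨a, x, c⟩, rfl⟩

instance : Module.Finite ℤ (mukaiLattice m) := Module.Finite.range _

def realExtension (f : (Fin m → ℚ) →ₗ[ℚ] ℚ) : (Fin m → ℝ) →ₗ[ℝ] ℝ :=
  ∑ i, (f (Pi.single i 1) : ℝ) • LinearMap.proj i

theorem realExtension_apply (f : (Fin m → ℚ) →ₗ[ℚ] ℚ) (x : Fin m → ℝ) :
    realExtension f x = ∑ i, (f (Pi.single i 1) : ℝ) * x i := by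
  simp [realExtension]

theorem realExtension_intCast (f : (Fin m → ℚ) →ₗ[ℚ] ℚ) (y : Fin m → ℤ) :
    realExtension f (intCast y) = f (fun i => (y i : ℚ)) := by
  have hy : (fun i => (y i : ℚ)) = ∑ i, (y i : ℚ) • Pi.single i 1 := by
    ext j
    simp [Finset.sum_apply, Pi.single_apply]
  simp [hy, realExtension_apply, intCast, mul_comm]

theorem sum_mul_complex_eq_iff (f : (Fin m → ℚ) →ₗ[ℚ] ℚ) (s₁ s₂ : Fin m → ℝ) (β : ℂ) :
    ∑ i, (f (Pi.single i 1) : ℂ) * ((s₁ i : ℂ) + (s₂ i : ℂ) * Complex.I) = β ↔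
      realExtension f s₁ = β.re ∧ realExtension f s₂ = β.im := by
  simp [Complex.ext_iff, Complex.re_sum, Complex.im_sum, realExtension_apply]

theorem linearIndependent_ratCast_of_intCast {ι : Type*} {x : ι → Fin m → ℤ}
    (hx : LinearIndependent ℝ (intCast ∘ x)) :
    LinearIndependent ℚ fun j i => (x j i : ℚ) := by
  refine LinearIndependent.of_comp ((Algebra.linearMap ℚ ℝ).compLeft (Fin m)) ?_
  convert hx.restrict_scalars' ℚ
  ext
  simp [intCast]

theorem exists_transcendental_and_functional_of_mem_span {s₁ s₂ : Fin m → ℝ}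
    (hs : LinearIndependent ℝ ![s₁, s₂]) {b₁ b₂ : ℝ} {L : Submodule ℤ (ℝ × (Fin m → ℝ) × ℝ)}
    (hLM : (L : Set (ℝ × (Fin m → ℝ) × ℝ)) ⊆ Mset m) (hL : finrank ℤ L = 2)
    (h₁ : ((0 : ℝ), s₁, b₁) ∈ span ℝ (L : Set (ℝ × (Fin m → ℝ) × ℝ)))
    (h₂ : ((0 : ℝ), s₂, b₂) ∈ span ℝ (L : Set (ℝ × (Fin m → ℝ) × ℝ))) :
    (∃ T : Submodule ℤ (Fin m → ℝ), (T : Set (Fin m → ℝ)) ⊆ Set.range intCast ∧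
        finrank ℤ T = 2 ∧ s₁ ∈ span ℝ (T : Set (Fin m → ℝ)) ∧ s₂ ∈ span ℝ (T : Set (Fin m → ℝ))) ∧
      ∃ f : (Fin m → ℚ) →ₗ[ℚ] ℚ, realExtension f s₁ = b₁ ∧ realExtension f s₂ = b₂ := by
  have hLΛ : L ≤ mukaiLattice m := by rwa [← SetLike.coe_subset_coe, coe_mukaiLattice]
  obtain ⟨v, w, rfl⟩ := exists_eq_span_pair_of_finrank_eq_two hLΛ hL
  obtain ⟨a₁, c₁, x₁, rfl⟩ := hLM (subset_span (Set.mem_insert _ _))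
  obtain ⟨a₂, c₂, x₂, rfl⟩ := hLM (subset_span (Set.mem_insert_of_mem _ rfl))
  rw [span_span_of_tower] at h₁ h₂
  obtain ⟨p₁, q₁, h₁⟩ := mem_span_pair.1 h₁
  obtain ⟨p₂, q₂, h₂⟩ := mem_span_pair.1 h₂
  simp only [Prod.ext_iff, Prod.smul_fst, Prod.smul_snd, Prod.fst_add, Prod.snd_add,
    smul_eq_mul] at h₁ h₂
  obtain ⟨-, hs₁, hb₁⟩ := h₁
  obtain ⟨-, hs₂, hb₂⟩ := h₂
  have hx : LinearIndependent ℝ ![intCast x₁, intCast x₂] :=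
    hs.pair_of_mem_span_pair (mem_span_pair.2 ⟨p₁, q₁, hs₁⟩) (mem_span_pair.2 ⟨p₂, q₂, hs₂⟩)
  have hx' : LinearIndependent ℝ (intCast ∘ ![x₁, x₂]) := by
    convert hx using 1
    ext j : 1
    fin_cases j <;> rfl
  obtain ⟨f, hf⟩ := (linearIndependent_ratCast_of_intCast hx').exists_linearMap_apply_eq
    ![(c₁ : ℚ), c₂]
  have hf_comb (p q : ℝ) :
      realExtension f (p • intCast x₁ + q • intCast x₂) = p * c₁ + q * c₂ := by
    have hf₁ : f (fun i => (x₁ i : ℚ)) = c₁ := hf 0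
    have hf₂ : f (fun i => (x₂ i : ℚ)) = c₂ := hf 1
    rw [map_add, map_smul, map_smul, realExtension_intCast, realExtension_intCast, hf₁, hf₂]
    simp
  refine ⟨⟨span ℤ {intCast x₁, intCast x₂}, ?_, ?_, ?_, ?_⟩, f, ?_, ?_⟩
  · exact (span_le.2 <| Set.insert_subset ⟨x₁, rfl⟩ (Set.singleton_subset_iff.2 ⟨x₂, rfl⟩) :
      span ℤ {intCast x₁, intCast x₂} ≤ LinearMap.range (intCastLinearMap m))
  · rw [← Matrix.range_cons_cons_empty]
    exact finrank_span_eq_card (hx.restrict_scalars' ℤ)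
  · rw [span_span_of_tower]; exact mem_span_pair.2 ⟨p₁, q₁, hs₁⟩
  · rw [span_span_of_tower]; exact mem_span_pair.2 ⟨p₂, q₂, hs₂⟩
  · rw [← hs₁, hf_comb, hb₁]
  · rw [← hs₂, hf_comb, hb₂]

theorem exists_mukai_of_transcendental {T : Submodule ℤ (Fin m → ℝ)}
    (hT : (T : Set (Fin m → ℝ)) ⊆ Set.range intCast) (f : (Fin m → ℚ) →ₗ[ℚ] ℚ) :
    ∃ L : Submodule ℤ (ℝ × (Fin m → ℝ) × ℝ), (L : Set (ℝ × (Fin m → ℝ) × ℝ)) ⊆ Mset m ∧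
      finrank ℤ L = finrank ℤ T ∧
      ∀ s ∈ span ℝ (T : Set (Fin m → ℝ)),
        ((0 : ℝ), s, realExtension f s) ∈ span ℝ (L : Set (ℝ × (Fin m → ℝ) × ℝ)) := by
  obtain ⟨N, hN, k, hk⟩ := exists_common_denominator fun i => f (Pi.single i 1)
  let G : (Fin m → ℝ) →ₗ[ℝ] ℝ × (Fin m → ℝ) × ℝ :=
    (N : ℝ) • (0 : (Fin m → ℝ) →ₗ[ℝ] ℝ).prod (LinearMap.id.prod (realExtension f))
  have hG : Function.Injective (G.restrictScalars ℤ) := by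
    intro x y hxy
    have := congrArg (fun z => z.2.1) hxy
    simpa [G, hN] using this
  refine ⟨T.map (G.restrictScalars ℤ), ?_, (equivMapOfInjective _ hG T).finrank_eq.symm, ?_⟩
  · rintro _ ⟨_, hy, rfl⟩
    obtain ⟨y, rfl⟩ := hT hy
    refine ⟨0, ∑ i, k i * y i, N • y, ?_⟩
    have hk' : ∀ i, (k i : ℝ) = N * f (Pi.single i 1) := fun i => by exact_mod_cast hk i
    ext
    · simp [G]
    · simp [G, intCast]
    · simp [G, realExtension_apply, intCast, hk', Finset.mul_sum, mul_assoc]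
  · intro s hs
    rw [map_coe, LinearMap.coe_restrictScalars, span_image]
    refine ⟨(N : ℝ)⁻¹ • s, smul_mem _ _ hs, ?_⟩
    simp [G, hN]

theorem complex_rigid_lattice_classification
    {m : ℕ} (s1 s2 : Fin m → ℝ) (hind : LinearIndependent ℝ ![s1, s2]) (β : ℂ) :
    (∃ L : Submodule ℤ (ℝ × (Fin m → ℝ) × ℝ),
        (L : Set (ℝ × (Fin m → ℝ) × ℝ)) ⊆ Mset m ∧
        Module.finrank ℤ L = 2 ∧
        ((0 : ℝ), s1, β.re) ∈ Submodule.span ℝ (L : Set (ℝ × (Fin m → ℝ) × ℝ)) ∧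
        ((0 : ℝ), s2, β.im) ∈ Submodule.span ℝ (L : Set (ℝ × (Fin m → ℝ) × ℝ))) ↔
    ((∃ T : Submodule ℤ (Fin m → ℝ),
        (T : Set (Fin m → ℝ)) ⊆ Set.range (intCast (m := m)) ∧
        Module.finrank ℤ T = 2 ∧
        s1 ∈ Submodule.span ℝ (T : Set (Fin m → ℝ)) ∧
        s2 ∈ Submodule.span ℝ (T : Set (Fin m → ℝ))) ∧
      (∃ f : (Fin m → ℚ) →ₗ[ℚ] ℚ,
        (∑ i, (f (Pi.single i 1) : ℂ) * ((s1 i : ℂ) + (s2 i : ℂ) * Complex.I)) = β)) := by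
  rw [and_congr_right fun _ => exists_congr fun f => sum_mul_complex_eq_iff f s1 s2 β]
  constructor
  · rintro ⟨L, hLM, hL, h₁, h₂⟩
    exact exists_transcendental_and_functional_of_mem_span hind hLM hL h₁ h₂
  · rintro ⟨⟨T, hTΛ, hT, h₁, h₂⟩, f, hf₁, hf₂⟩
    obtain ⟨L, hLM, hL, hspan⟩ := exists_mukai_of_transcendental hTΛ f
    exact ⟨L, hLM, hL.trans hT, hf₁ ▸ hspan s1 h₁, hf₂ ▸ hspan s2 h₂⟩
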